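/- If K is a full subcryptogroup of a Hausdorff band of topological groups S such that K is discrete in the subspace topology, then K is closed in S. -/

import Mathlib

/-!
Let `x` lie in the closure of `K` and let `e = x⁰ ∈ K`. Discreteness gives a neighbourhood `V`
of `e` with `V ∩ K = {e}`. Since `(y, z) ↦ y⁻¹ * z` is continuous and sends `(x, x)` to `e`,
some neighbourhood `W` of `x`, which may be taken inside the open group `H_x`, satisfies
`W⁻¹ W ⊆ V`. Two points `y, z` of `W ∩ K` then have `y⁻¹ * z ∈ V ∩ K = {e}`, so `z = y` by
cancellation in the group `H_x`. Thus `W ∩ K` has at most one point, and in a `T₁` space this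
forces `x ∈ K`.
-/

open Set TopologicalSpace

/-- The principal left ideal (with `a` adjoined) generated by `a`: `{a} ∪ {s*a : s ∈ S}`. -/
def leftIdeal {S : Type*} [Semigroup S] (a : S) : Set S :=
  insert a {x | ∃ s, x = s * a}

/-- The principal right ideal (with `a` adjoined) generated by `a`: `{a} ∪ {a*s : s ∈ S}`. -/
def rightIdeal {S : Type*} [Semigroup S] (a : S) : Set S :=
  insert a {x | ∃ s, x = a * s}

/-- Green's relation ℋ on a semigroup. -/
def greenH {S : Type*} [Semigroup S] (a b : S) : Prop :=
  leftIdeal a = leftIdeal b ∧ rightIdeal a = rightIdeal b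

/-- The ℋ-class of an element. -/
def HClass {S : Type*} [Semigroup S] (x : S) : Set S := {y | greenH y x}

/-- A semigroup is completely regular if every element is completely regular. -/
def CompletelyRegularSemigroup (S : Type*) [Semigroup S] : Prop :=
  ∀ a : S, ∃ x, a = a * x * a ∧ a * x = x * a

/-- Green's relation ℋ is a congruence. -/
def HIsCongruence (S : Type*) [Semigroup S] : Prop :=
  ∀ a b c : S, greenH a b → greenH (a * c) (b * c) ∧ greenH (c * a) (c * b)

/-- A cryptogroup is a completely regular semigroup in which ℋ is a congruence. -/
def IsCryptogroup (S : Type*) [Semigroup S] : Prop :=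
  CompletelyRegularSemigroup S ∧ HIsCongruence S

/-- In a cryptogroup every ℋ-class is a group; `idp x` (written `x⁰`) is the identity of the
ℋ-class of `x`, and `inv x` (written `x⁻¹`) is the inverse of `x` inside its ℋ-class. -/
structure CryptoOps (S : Type*) [Semigroup S] where
  idp : S → S
  inv : S → S
  idp_mem : ∀ x, greenH (idp x) x
  idp_mul : ∀ x y, greenH y x → idp x * y = y
  mul_idp : ∀ x y, greenH y x → y * idp x = y
  inv_mem : ∀ x, greenH (inv x) x
  mul_inv : ∀ x, x * inv x = idp x
  inv_mul : ∀ x, inv x * x = idp x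

/-- The set `E(S)` of idempotents of a semigroup. -/
def idemSet (S : Type*) [Semigroup S] : Set S := {e | e * e = e}

/-- `(xU)* = {y ∈ S : x⁻¹*y ∈ U and x⁰ = y⁰}`. -/
def lstar {S : Type*} [Semigroup S] (ops : CryptoOps S) (x : S) (U : Set S) : Set S :=
  {y | ops.inv x * y ∈ U ∧ ops.idp x = ops.idp y}

/-- `(Ux)* = {y ∈ S : y*x⁻¹ ∈ U and x⁰ = y⁰}`. -/
def rstar {S : Type*} [Semigroup S] (ops : CryptoOps S) (U : Set S) (x : S) : Set S :=
  {y | y * ops.inv x ∈ U ∧ ops.idp x = ops.idp y}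

/-- `(AB)* = ⋃_{a ∈ A} (aB)*`. -/
def setStar {S : Type*} [Semigroup S] (ops : CryptoOps S) (A B : Set S) : Set S :=
  ⋃ a ∈ A, lstar ops a B

/-- A full subcryptogroup: contains all idempotents, and closed under multiplication
and inversion. -/
def IsFullSubcryptogroup {S : Type*} [Semigroup S] (ops : CryptoOps S) (K : Set S) : Prop :=
  idemSet S ⊆ K ∧ (∀ x ∈ K, ∀ y ∈ K, x * y ∈ K) ∧ (∀ x ∈ K, ops.inv x ∈ K)

open Filter Topology

theorem mem_of_mem_closure_of_subsingleton_inter {X : Type*} [TopologicalSpace X] [T1Space X]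
    {s t : Set X} {x : X} (hx : x ∈ closure s) (ht : t ∈ 𝓝 x) (hts : (t ∩ s).Subsingleton) :
    x ∈ s := by
  obtain ⟨u, hut, hu, hxu⟩ := mem_nhds_iff.mp ht
  have hus : (u ∩ s).Subsingleton := hts.anti (inter_subset_inter_left s hut)
  have hx' := hu.inter_closure ⟨hxu, hx⟩
  rw [hus.closure_eq] at hx'
  exact hx'.2

section Green

variable {S : Type*} [Semigroup S]

theorem greenH.refl (a : S) : greenH a a := ⟨rfl, rfl⟩

theorem greenH.symm {a b : S} (h : greenH a b) : greenH b a := ⟨h.1.symm, h.2.symm⟩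

theorem greenH.trans {a b c : S} (h₁ : greenH a b) (h₂ : greenH b c) : greenH a c :=
  ⟨h₁.1.trans h₂.1, h₁.2.trans h₂.2⟩

end Green

namespace CryptoOps

variable {S : Type*} [Semigroup S] (ops : CryptoOps S)

theorem idp_mul_idp (x : S) : ops.idp x * ops.idp x = ops.idp x :=
  ops.idp_mul x (ops.idp x) (ops.idp_mem x)

theorem idp_eq_of_greenH {x y : S} (h : greenH y x) : ops.idp y = ops.idp x := by
  have h₁ := ops.idp_mul x (ops.idp y) ((ops.idp_mem y).trans h)
  have h₂ := ops.mul_idp y (ops.idp x) ((ops.idp_mem x).trans h.symm)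
  rwa [h₁] at h₂

theorem eq_of_inv_mul_eq_idp {y z : S} (h : greenH z y) (hyz : ops.inv y * z = ops.idp y) :
    z = y :=
  calc z = ops.idp z * z := (ops.idp_mul z z (greenH.refl z)).symm
    _ = y * (ops.inv y * z) := by rw [ops.idp_eq_of_greenH h, ← mul_assoc, ops.mul_inv]
    _ = y := by rw [hyz, ops.mul_idp y y (greenH.refl y)]

end CryptoOps

theorem stmt18_general {S : Type*} [Semigroup S] [TopologicalSpace S] [ContinuousMul S]
    (ops : CryptoOps S)
    (hinv : Continuous ops.inv) (hopen : ∀ x : S, IsOpen (HClass x))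
    [T2Space S]
    (K : Set S) (hK : IsFullSubcryptogroup ops K) (hKdisc : DiscreteTopology K) :
    IsClosed K := by
  obtain ⟨hE, hmul, hKinv⟩ := hK
  refine isClosed_of_closure_subset fun x hx => ?_
  obtain ⟨V, hV, hVK⟩ := discreteTopology_subtype_iff'.mp hKdisc _ (hE (ops.idp_mul_idp x))
  have hcont : Continuous fun p : S × S => ops.inv p.1 * p.2 :=
    (hinv.comp continuous_fst).mul continuous_snd
  obtain ⟨W, hW, hWV⟩ : ∃ W ∈ 𝓝 x, W ×ˢ W ⊆ (fun p : S × S => ops.inv p.1 * p.2) ⁻¹' V := by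
    rw [← mem_prod_self_iff, ← nhds_prod_eq]
    refine hcont.continuousAt.preimage_mem_nhds (hV.mem_nhds ?_)
    show ops.inv x * x ∈ V
    rw [ops.inv_mul]
    exact (hVK.ge rfl).1
  refine mem_of_mem_closure_of_subsingleton_inter hx
    (inter_mem hW ((hopen x).mem_nhds (greenH.refl x))) ?_
  rintro y ⟨⟨hyW, hyx⟩, hyK⟩ z ⟨⟨hzW, hzx⟩, hzK⟩
  have hyz : ops.inv y * z ∈ V ∩ K := ⟨hWV (mk_mem_prod hyW hzW), hmul _ (hKinv y hyK) z hzK⟩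
  rw [hVK, mem_singleton_iff, ← ops.idp_eq_of_greenH hyx] at hyz
  exact (ops.eq_of_inv_mul_eq_idp (hzx.trans hyx.symm) hyz).symm

/-- A discrete full subcryptogroup of a Hausdorff band of topological groups is closed. -/
theorem stmt18 {S : Type*} [Semigroup S] [TopologicalSpace S] [ContinuousMul S]
    (ops : CryptoOps S) (hcrypt : IsCryptogroup S)
    (hinv : Continuous ops.inv) (hopen : ∀ x : S, IsOpen (HClass x))
    [T2Space S]
    (K : Set S) (hK : IsFullSubcryptogroup ops K) (hKdisc : DiscreteTopology K) :
    IsClosed K :=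
  stmt18_general ops hinv hopen K hK hKdisc
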